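/- Define ret : D → ℂⁿ coordinatewise by ret(v)_i := √(‖v‖₊·‖v‖₋)·v_i/‖v‖₊ for i ∈ P and ret(v)_i := √(‖v‖₊·‖v‖₋)·v_i/‖v‖₋ for i ∈ N. Then for every v ∈ D: (i) ‖ret(v)‖₊ = ‖ret(v)‖₋ = √(‖v‖₊·‖v‖₋), so that ret maps D into the slit quadric Q× := {v ∈ D : ‖v‖₊ = ‖v‖₋}; (ii) ret(v) = v whenever ‖v‖₊ = ‖v‖₋, so ret is a retraction of D onto Q×; (iii) ret is equivariant for the weighted circle action: ret(g_t·v) = g_t·ret(v) for all t ∈ ℝ, where g_t·v := (e^{2πi k(i) t} v_i)_i; (iv) ret is C^∞ on D. -/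

import Mathlib

open Finset

/-- `‖w‖₊² := Σ_{i : k i > 0} k(i)·|w_i|²`. -/
noncomputable def normPlusSq (n : ℕ) (k : Fin n → ℤ) (w : Fin n → ℂ) : ℝ :=
  ∑ i ∈ univ.filter (fun i => 0 < k i), (k i : ℝ) * ‖w i‖ ^ 2

/-- `‖w‖₋² := Σ_{i : k i < 0} (−k(i))·|w_i|²`. -/
noncomputable def normMinusSq (n : ℕ) (k : Fin n → ℤ) (w : Fin n → ℂ) : ℝ :=
  ∑ i ∈ univ.filter (fun i => k i < 0), (-(k i) : ℝ) * ‖w i‖ ^ 2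

/-- `‖w‖₊`. -/
noncomputable def normPlus (n : ℕ) (k : Fin n → ℤ) (w : Fin n → ℂ) : ℝ :=
  Real.sqrt (normPlusSq n k w)

/-- `‖w‖₋`. -/
noncomputable def normMinus (n : ℕ) (k : Fin n → ℤ) (w : Fin n → ℂ) : ℝ :=
  Real.sqrt (normMinusSq n k w)

/-- `D := {w : (w_i)_{i∈P} ≠ 0 and (w_i)_{i∈N} ≠ 0}`. -/
def domD (n : ℕ) (k : Fin n → ℤ) : Set (Fin n → ℂ) :=
  {w | (∃ i, 0 < k i ∧ w i ≠ 0) ∧ (∃ i, k i < 0 ∧ w i ≠ 0)}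

/-- The weighted circle action `g_t·w := (e^{2πi k(i) t} w_i)_i`. -/
noncomputable def circleAct (n : ℕ) (k : Fin n → ℤ) (t : ℝ) (w : Fin n → ℂ) : Fin n → ℂ :=
  fun i => Complex.exp ((2 * Real.pi * (k i : ℝ) * t : ℝ) * Complex.I) * w i

/-- The retraction `ret(v)_i := √(‖v‖₊·‖v‖₋)·v_i/‖v‖₊` for `i ∈ P`, and
`ret(v)_i := √(‖v‖₊·‖v‖₋)·v_i/‖v‖₋` for `i ∈ N`. -/
noncomputable def retMap (n : ℕ) (k : Fin n → ℤ) (v : Fin n → ℂ) : Fin n → ℂ :=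
  fun i =>
    if 0 < k i then
      ((Real.sqrt (normPlus n k v * normMinus n k v) / normPlus n k v : ℝ) : ℂ) * v i
    else
      ((Real.sqrt (normPlus n k v * normMinus n k v) / normMinus n k v : ℝ) : ℂ) * v i

lemma normPlusSq_pos (n : ℕ) (k : Fin n → ℤ) (w : Fin n → ℂ)
    (hw : ∃ i, 0 < k i ∧ w i ≠ 0) : 0 < normPlusSq n k w := by
  obtain ⟨i, hki, hwi⟩ := hw
  refine Finset.sum_pos' (fun j hj => ?_) ⟨i, by simp [hki], ?_⟩
  · simp only [mem_filter] at hj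
    exact mul_nonneg (by exact_mod_cast hj.2.le) (sq_nonneg _)
  · exact mul_pos (by exact_mod_cast hki) (pow_pos (norm_pos_iff.mpr hwi) 2)

lemma normMinusSq_pos (n : ℕ) (k : Fin n → ℤ) (w : Fin n → ℂ)
    (hw : ∃ i, k i < 0 ∧ w i ≠ 0) : 0 < normMinusSq n k w := by
  obtain ⟨i, hki, hwi⟩ := hw
  refine Finset.sum_pos' (fun j hj => ?_) ⟨i, by simp [hki], ?_⟩
  · simp only [mem_filter] at hj
    have : (0:ℝ) ≤ -(k j : ℝ) := by
      have h2 : (k j : ℝ) ≤ 0 := by exact_mod_cast hj.2.le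
      linarith
    exact mul_nonneg this (sq_nonneg _)
  · have : (0:ℝ) < -(k i : ℝ) := by
      have : (k i : ℝ) < 0 := by exact_mod_cast hki
      linarith
    exact mul_pos this (pow_pos (norm_pos_iff.mpr hwi) 2)

lemma contDiff_normSqC : ContDiff ℝ (⊤ : ℕ∞) (fun z : ℂ => ‖z‖^2) := by
  have h : (fun z : ℂ => ‖z‖^2) = fun z => z.re*z.re + z.im*z.im := by
    funext z
    rw [Complex.sq_norm, Complex.normSq_apply]
  rw [h]
  exact (Complex.reCLM.contDiff.mul Complex.reCLM.contDiff).add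
    (Complex.imCLM.contDiff.mul Complex.imCLM.contDiff)

lemma contDiff_normPlusSq (n : ℕ) (k : Fin n → ℤ) : ContDiff ℝ (⊤ : ℕ∞) (normPlusSq n k) := by
  unfold normPlusSq
  exact ContDiff.sum fun i _ => contDiff_const.mul
    (contDiff_normSqC.comp (ContinuousLinearMap.proj (R := ℝ) (φ := fun _ : Fin n => ℂ) i).contDiff)

lemma contDiff_normMinusSq (n : ℕ) (k : Fin n → ℤ) : ContDiff ℝ (⊤ : ℕ∞) (normMinusSq n k) := by
  unfold normMinusSq
  exact ContDiff.sum fun i _ => contDiff_const.mul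
    (contDiff_normSqC.comp (ContinuousLinearMap.proj (R := ℝ) (φ := fun _ : Fin n => ℂ) i).contDiff)

lemma normPlusSq_smul (n : ℕ) (k : Fin n → ℤ) (c : ℝ) (hc : 0 ≤ c)
    (w f : Fin n → ℂ) (hmatch : ∀ i, 0 < k i → f i = (c:ℂ) * w i) :
    normPlusSq n k f = c^2 * normPlusSq n k w := by
  unfold normPlusSq
  rw [Finset.mul_sum]
  refine Finset.sum_congr rfl fun i hi => ?_
  simp only [mem_filter] at hi
  rw [hmatch i hi.2, norm_mul, Complex.norm_real, Real.norm_eq_abs, abs_of_nonneg hc]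
  ring

lemma normMinusSq_smul (n : ℕ) (k : Fin n → ℤ) (c : ℝ) (hc : 0 ≤ c)
    (w f : Fin n → ℂ) (hmatch : ∀ i, k i < 0 → f i = (c:ℂ) * w i) :
    normMinusSq n k f = c^2 * normMinusSq n k w := by
  unfold normMinusSq
  rw [Finset.mul_sum]
  refine Finset.sum_congr rfl fun i hi => ?_
  simp only [mem_filter] at hi
  rw [hmatch i hi.2, norm_mul, Complex.norm_real, Real.norm_eq_abs, abs_of_nonneg hc]
  ring

lemma normPlusSq_circle (n : ℕ) (k : Fin n → ℤ) (t : ℝ) (w : Fin n → ℂ) :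
    normPlusSq n k (circleAct n k t w) = normPlusSq n k w := by
  unfold normPlusSq circleAct
  refine Finset.sum_congr rfl fun i _ => ?_
  rw [norm_mul, Complex.norm_exp_ofReal_mul_I, one_mul]

lemma normMinusSq_circle (n : ℕ) (k : Fin n → ℤ) (t : ℝ) (w : Fin n → ℂ) :
    normMinusSq n k (circleAct n k t w) = normMinusSq n k w := by
  unfold normMinusSq circleAct
  refine Finset.sum_congr rfl fun i _ => ?_
  rw [norm_mul, Complex.norm_exp_ofReal_mul_I, one_mul]

lemma normPlus_circle (n : ℕ) (k : Fin n → ℤ) (t : ℝ) (w : Fin n → ℂ) :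
    normPlus n k (circleAct n k t w) = normPlus n k w := by
  unfold normPlus; rw [normPlusSq_circle]

lemma normMinus_circle (n : ℕ) (k : Fin n → ℤ) (t : ℝ) (w : Fin n → ℂ) :
    normMinus n k (circleAct n k t w) = normMinus n k w := by
  unfold normMinus; rw [normMinusSq_circle]

/-- `ret` is a smooth `S¹`-equivariant retraction of `D` onto the slit
quadric `Q× = {v ∈ D : ‖v‖₊ = ‖v‖₋}`, with
`‖ret(v)‖₊ = ‖ret(v)‖₋ = √(‖v‖₊·‖v‖₋)`. -/
theorem retraction_onto_slit_quadric
    (n : ℕ) (hn : 1 ≤ n) (k : Fin n → ℤ) (hk : ∀ i, k i ≠ 0)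
    (hP : ∃ i, 0 < k i) (hN : ∃ i, k i < 0) :
    (∀ v ∈ domD n k,
      retMap n k v ∈ domD n k ∧
      normPlus n k (retMap n k v) = Real.sqrt (normPlus n k v * normMinus n k v) ∧
      normMinus n k (retMap n k v) = Real.sqrt (normPlus n k v * normMinus n k v)) ∧
    (∀ v ∈ domD n k, normPlus n k v = normMinus n k v → retMap n k v = v) ∧
    (∀ v ∈ domD n k, ∀ t : ℝ,
      retMap n k (circleAct n k t v) = circleAct n k t (retMap n k v)) ∧
    ContDiffOn ℝ (⊤ : ℕ∞) (retMap n k) (domD n k) := by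
  refine ⟨?_, ?_, ?_, ?_⟩
  · -- (i) norms of the retraction
    intro v hv
    have hp : 0 < normPlusSq n k v := normPlusSq_pos n k v hv.1
    have hm : 0 < normMinusSq n k v := normMinusSq_pos n k v hv.2
    have hNp : 0 < normPlus n k v := Real.sqrt_pos.mpr hp
    have hNm : 0 < normMinus n k v := Real.sqrt_pos.mpr hm
    have hs : 0 < Real.sqrt (normPlus n k v * normMinus n k v) :=
      Real.sqrt_pos.mpr (mul_pos hNp hNm)
    have hcP : 0 < Real.sqrt (normPlus n k v * normMinus n k v) / normPlus n k v :=
      div_pos hs hNp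
    have hcM : 0 < Real.sqrt (normPlus n k v * normMinus n k v) / normMinus n k v :=
      div_pos hs hNm
    have hsq : Real.sqrt (normPlus n k v * normMinus n k v) ^ 2
        = normPlus n k v * normMinus n k v := Real.sq_sqrt (mul_pos hNp hNm).le
    have ePlus : normPlusSq n k (retMap n k v)
        = normPlus n k v * normMinus n k v := by
      rw [normPlusSq_smul n k _ hcP.le v (retMap n k v)
        (fun i hi => by simp [retMap, hi])]
      have hNp2 : normPlus n k v ^ 2 = normPlusSq n k v := Real.sq_sqrt hp.le
      rw [div_pow, hsq, ← hNp2, div_mul_cancel₀ _ (pow_ne_zero 2 hNp.ne')]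
    have eMinus : normMinusSq n k (retMap n k v)
        = normPlus n k v * normMinus n k v := by
      rw [normMinusSq_smul n k _ hcM.le v (retMap n k v)
        (fun i hi => by simp [retMap, hi, not_lt_of_gt, (hi.trans (by norm_num : (0:ℤ) < 1))])]
      have hNm2 : normMinus n k v ^ 2 = normMinusSq n k v := Real.sq_sqrt hm.le
      rw [div_pow, hsq, ← hNm2, div_mul_cancel₀ _ (pow_ne_zero 2 hNm.ne')]
    refine ⟨⟨?_, ?_⟩, ?_, ?_⟩
    · obtain ⟨i, hki, hvi⟩ := hv.1
      exact ⟨i, hki, by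
        simp only [retMap, if_pos hki]
        exact mul_ne_zero (Complex.ofReal_ne_zero.mpr hcP.ne') hvi⟩
    · obtain ⟨i, hki, hvi⟩ := hv.2
      have hik : ¬ 0 < k i := not_lt_of_gt hki
      exact ⟨i, hki, by
        simp only [retMap, if_neg hik]
        exact mul_ne_zero (Complex.ofReal_ne_zero.mpr hcM.ne') hvi⟩
    · have h0 : normPlus n k (retMap n k v) = Real.sqrt (normPlusSq n k (retMap n k v)) := rfl
      rw [h0, ePlus]
    · have h0 : normMinus n k (retMap n k v) = Real.sqrt (normMinusSq n k (retMap n k v)) := rfl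
      rw [h0, eMinus]
  · -- (ii) retraction
    intro v hv h
    have hp : 0 < normPlusSq n k v := normPlusSq_pos n k v hv.1
    have hm : 0 < normMinusSq n k v := normMinusSq_pos n k v hv.2
    have hNp : 0 < normPlus n k v := Real.sqrt_pos.mpr hp
    have hNm : 0 < normMinus n k v := Real.sqrt_pos.mpr hm
    have hroot : Real.sqrt (normPlus n k v * normMinus n k v) = normPlus n k v := by
      rw [← h, Real.sqrt_mul_self hNp.le]
    funext i
    by_cases hki : 0 < k i
    · simp [retMap, hki, hroot, div_self hNp.ne']
    · simp [retMap, hki, hroot, h, Real.sqrt_mul_self hNm.le, div_self hNm.ne']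
  · -- (iii) equivariance
    intro v hv t
    funext i
    by_cases hki : 0 < k i
    · simp only [retMap, circleAct, if_pos hki, normPlus_circle, normMinus_circle]
      ring
    · simp only [retMap, circleAct, if_neg hki, normPlus_circle, normMinus_circle]
      ring
  · -- (iv) smoothness
    rw [contDiffOn_pi]
    intro i v hv
    apply ContDiffAt.contDiffWithinAt
    have hp : 0 < normPlusSq n k v := normPlusSq_pos n k v hv.1
    have hm : 0 < normMinusSq n k v := normMinusSq_pos n k v hv.2
    have hNp : 0 < normPlus n k v := Real.sqrt_pos.mpr hp
    have hNm : 0 < normMinus n k v := Real.sqrt_pos.mpr hm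
    have h1 : ContDiffAt ℝ (⊤ : ℕ∞) (Real.sqrt ∘ normPlusSq n k) v :=
      ContDiffAt.comp v (Real.contDiffAt_sqrt hp.ne') (contDiff_normPlusSq n k).contDiffAt
    have h2 : ContDiffAt ℝ (⊤ : ℕ∞) (Real.sqrt ∘ normMinusSq n k) v :=
      ContDiffAt.comp v (Real.contDiffAt_sqrt hm.ne') (contDiff_normMinusSq n k).contDiffAt
    have hprodne : (fun w => (Real.sqrt ∘ normPlusSq n k) w * (Real.sqrt ∘ normMinusSq n k) w) v ≠ 0 :=
      (mul_pos hNp hNm).ne'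
    have h3 : ContDiffAt ℝ (⊤ : ℕ∞)
        (Real.sqrt ∘ fun w => (Real.sqrt ∘ normPlusSq n k) w * (Real.sqrt ∘ normMinusSq n k) w) v :=
      ContDiffAt.comp v (Real.contDiffAt_sqrt hprodne) (h1.mul h2)
    have hproj : ContDiffAt ℝ (⊤ : ℕ∞) (fun w : Fin n → ℂ => w i) v :=
      (ContinuousLinearMap.proj (R := ℝ) (φ := fun _ : Fin n => ℂ) i).contDiff.contDiffAt
    have hofReal : ContDiff ℝ (⊤ : ℕ∞) (fun x : ℝ => (x : ℂ)) := Complex.ofRealCLM.contDiff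
    by_cases hki : 0 < k i
    · have hfun : (fun w => retMap n k w i)
          = fun w => ((Real.sqrt (Real.sqrt (normPlusSq n k w) * Real.sqrt (normMinusSq n k w))
              / Real.sqrt (normPlusSq n k w) : ℝ) : ℂ) * w i := by
        funext w; simp [retMap, normPlus, normMinus, hki]
      rw [hfun]
      exact ((hofReal.contDiffAt).comp v (h3.div h1 hNp.ne')).mul hproj
    · have hfun : (fun w => retMap n k w i)
          = fun w => ((Real.sqrt (Real.sqrt (normPlusSq n k w) * Real.sqrt (normMinusSq n k w))
              / Real.sqrt (normMinusSq n k w) : ℝ) : ℂ) * w i := by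
        funext w; simp [retMap, normPlus, normMinus, hki]
      rw [hfun]
      exact ((hofReal.contDiffAt).comp v (h3.div h2 hNm.ne')).mul hproj
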